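/- arXiv:2211.06362 — 4 statements merged into one kernel-verified Lean document; each statement's English description precedes it below -/
import Mathlib

section
/- Let n ≥ 1 and let A : ℕ → ℝ → ℝ be a family of functions with A i monotone nondecreasing in ρ for each i, and let c > 0, R > 0, ε : ℕ → ℝ with ε i ≥ 0. Suppose A 0 is the constant function c on (0,R), and for each i < n and all 0 < r1 < r2 < R, ∫_{r1}^{r2} A i (ρ) dρ ≤ A (i+1) (r2) + 2·(ε i)·R. Then for all 0 < r1 < r2 < R, c · (r2 - r1)^n / n! ≤ A n (r2) + (2·(ε 0)·R^n + 2·(ε 1)·R^(n-1) + ⋯ + 2·(ε (n-1))·R). -/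
open MeasureTheory Finset

/-!
Induction on the level `i`: if `c (ρ - r₁)^i / i! - E ≤ A i ρ` for `r₁ < ρ < R`, integrating
over `[r₁, r₂]` and applying the annulus bound gives `c (r₂ - r₁)^(i+1) / (i+1)! ≤ A (i+1) r₂
+ 2 εᵢ R + (r₂ - r₁) E`, and `r₂ - r₁ ≤ R` turns the accumulated error `E` into `R E`.
-/

theorem integral_mul_sub_pow_div_factorial (c a b : ℝ) (i : ℕ) :
    ∫ ρ in a..b, c * (ρ - a) ^ i / i.factorial = c * (b - a) ^ (i + 1) / (i + 1).factorial := by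
  have hshift : ∫ ρ in a..b, (ρ - a) ^ i = (b - a) ^ (i + 1) / (i + 1) := by
    simp [intervalIntegral.integral_comp_sub_right (fun x : ℝ => x ^ i) a, integral_pow]
  simp_rw [mul_div_assoc, intervalIntegral.integral_const_mul, intervalIntegral.integral_div,
    hshift, Nat.factorial_succ]
  push_cast
  field_simp

theorem sum_range_succ_mul_pow_sub {S : Type*} [CommSemiring S] (a : ℕ → S) (R : S) (i : ℕ) :
    ∑ j ∈ range (i + 1), a j * R ^ (i + 1 - j) = a i * R + R * ∑ j ∈ range i, a j * R ^ (i - j) := by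
  rw [sum_range_succ, Nat.add_sub_cancel_left, pow_one, add_comm, mul_sum]
  congr 1
  refine sum_congr rfl fun j hj => ?_
  rw [Nat.sub_add_comm (mem_range.mp hj).le, pow_succ]
  ring

theorem annulus_bound_succ {f g : ℝ → ℝ} {R c E δ : ℝ} {i : ℕ}
    (hf : MonotoneOn f (Set.Ioo 0 R)) (hE : 0 ≤ E)
    (hlow : ∀ r₁ ρ : ℝ, 0 < r₁ → r₁ < ρ → ρ < R → c * (ρ - r₁) ^ i / i.factorial ≤ f ρ + E)
    (hannulus : ∀ r₁ r₂ : ℝ, 0 < r₁ → r₁ < r₂ → r₂ < R → ∫ ρ in r₁..r₂, f ρ ≤ g r₂ + δ)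
    (r₁ r₂ : ℝ) (h₁ : 0 < r₁) (h₁₂ : r₁ < r₂) (h₂ : r₂ < R) :
    c * (r₂ - r₁) ^ (i + 1) / (i + 1).factorial ≤ g r₂ + (δ + R * E) := by
  have hsub : Set.uIcc r₁ r₂ ⊆ Set.Ioo 0 R := by
    rw [Set.uIcc_of_le h₁₂.le]
    exact fun x hx => ⟨h₁.trans_le hx.1, hx.2.trans_lt h₂⟩
  have hfint : IntervalIntegrable f volume r₁ r₂ := (hf.mono hsub).intervalIntegrable
  have hpow : IntervalIntegrable (fun ρ => c * (ρ - r₁) ^ i / i.factorial) volume r₁ r₂ :=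
    (by fun_prop : Continuous fun ρ : ℝ => c * (ρ - r₁) ^ i / i.factorial).intervalIntegrable _ _
  have hmono : ∫ ρ in r₁..r₂, (c * (ρ - r₁) ^ i / i.factorial - E) ≤ ∫ ρ in r₁..r₂, f ρ :=
    intervalIntegral.integral_mono_on_of_le_Ioo h₁₂.le (hpow.sub intervalIntegrable_const) hfint
      fun ρ hρ => sub_le_iff_le_add.mpr (hlow r₁ ρ h₁ hρ.1 (hρ.2.trans h₂))
  have hlhs : ∫ ρ in r₁..r₂, (c * (ρ - r₁) ^ i / i.factorial - E) =
      c * (r₂ - r₁) ^ (i + 1) / (i + 1).factorial - (r₂ - r₁) * E := by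
    rw [intervalIntegral.integral_sub hpow intervalIntegrable_const,
      integral_mul_sub_pow_div_factorial, intervalIntegral.integral_const, smul_eq_mul]
  have herr : (r₂ - r₁) * E ≤ R * E := mul_le_mul_of_nonneg_right (by linarith) hE
  linarith [hannulus r₁ r₂ h₁ h₁₂ h₂]

theorem iterated_annulus_bound_general
    (n : ℕ) (A : ℕ → ℝ → ℝ) (c R : ℝ) (ε : ℕ → ℝ)
    (hε : ∀ i, 0 ≤ ε i)
    (hmono : ∀ i, MonotoneOn (A i) (Set.Ioo 0 R))
    (hA0 : ∀ ρ ∈ Set.Ioo (0:ℝ) R, A 0 ρ = c)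
    (hstep : ∀ i < n, ∀ r1 r2 : ℝ, 0 < r1 → r1 < r2 → r2 < R →
      ∫ ρ in r1..r2, A i ρ ≤ A (i+1) r2 + 2 * ε i * R) :
    ∀ r1 r2 : ℝ, 0 < r1 → r1 < r2 → r2 < R →
      c * (r2 - r1) ^ n / (Nat.factorial n) ≤
        A n r2 + ∑ i ∈ Finset.range n, 2 * ε i * R ^ (n - i) := by
  intro r1 r2 h1 h12 h2R
  have hR : 0 ≤ R := by linarith
  suffices hlevel : ∀ i ≤ n, ∀ r1 r2 : ℝ, 0 < r1 → r1 < r2 → r2 < R →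
      c * (r2 - r1) ^ i / i.factorial ≤ A i r2 + ∑ j ∈ range i, 2 * ε j * R ^ (i - j) from
    hlevel n le_rfl r1 r2 h1 h12 h2R
  intro i
  induction i with
  | zero =>
    rintro - r1 r2 h1 h12 h2R
    simp [hA0 r2 ⟨h1.trans h12, h2R⟩]
  | succ i ih =>
    intro hi
    have herr : 0 ≤ ∑ j ∈ range i, 2 * ε j * R ^ (i - j) :=
      sum_nonneg fun j _ => by have := hε j; positivity
    simp_rw [sum_range_succ_mul_pow_sub]
    exact annulus_bound_succ (hmono i) herr (ih (Nat.le_of_succ_le hi)) (hstep i hi)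

/-- Iterated-integration induction of Lemma 3.2: from a constant count `A 0 = c`
on `(0, R)` and annulus bounds `∫_{r1}^{r2} A i ≤ A (i+1) r2 + 2 εᵢ R` at every level,
one gets the Euclidean-type lower bound
`c (r2 - r1)^n / n! ≤ A n r2 + Σ_{i<n} 2 εᵢ R^(n-i)`. -/
theorem iterated_annulus_bound
    (n : ℕ) (hn : 1 ≤ n) (A : ℕ → ℝ → ℝ) (c R : ℝ) (ε : ℕ → ℝ)
    (hc : 0 < c) (hR : 0 < R) (hε : ∀ i, 0 ≤ ε i)
    (hmono : ∀ i, MonotoneOn (A i) (Set.Ioo 0 R))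
    (hA0 : ∀ ρ ∈ Set.Ioo (0:ℝ) R, A 0 ρ = c)
    (hstep : ∀ i < n, ∀ r1 r2 : ℝ, 0 < r1 → r1 < r2 → r2 < R →
      ∫ ρ in r1..r2, A i ρ ≤ A (i+1) r2 + 2 * ε i * R) :
    ∀ r1 r2 : ℝ, 0 < r1 → r1 < r2 → r2 < R →
      c * (r2 - r1) ^ n / (Nat.factorial n) ≤
        A n r2 + ∑ i ∈ Finset.range n, 2 * ε i * R ^ (n - i) :=
  iterated_annulus_bound_general n A c R ε hε hmono hA0 hstep
end

section
/- Let Γ be a group acting on a set X, let F ⊆ Γ be a finite set with 1 ∉ F and F = F⁻¹, and suppose X is partitioned into sets X_1, …, X_m such that X_j ∩ γX_j = ∅ for all j and all γ ∈ F. Let A ⊆ X. Define A_0 = ∅ and A_j = A_{j-1} ∪ ((A ∩ X_j) \ ⋃_{γ ∈ F} γA_{j-1}) for j = 1,…,m, and set E = A_m. Then: (1) E ⊆ A; (2) E ∩ γE = ∅ for all γ ∈ F; (3) E is maximal in the sense that every x ∈ A \ E satisfies x ∈ γE for some γ ∈ F. -/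
/-!
A point added at stage `j` lies in `X_j` and outside every `γ A_{j-1}`. It therefore avoids the
translates of the earlier points, and, because `F = F⁻¹`, the earlier points avoid its translates;
points added at the same stage cannot collide since `X_j ∩ γ X_j = ∅`. Conversely a point of
`A ∩ X_j` that was not added at stage `j` was rejected for lying in some `γ A_{j-1} ⊆ γ E`.
-/

open scoped Pointwise
open Set

section

variable {Γ X : Type*} [Group Γ] [MulAction Γ X] {F : Set Γ}

theorem disjoint_smul_union_sdiff_iUnion_smul (hF : ∀ γ ∈ F, γ⁻¹ ∈ F)
    {S Y : Set X} (hS : ∀ γ ∈ F, Disjoint S (γ • S)) (hY : ∀ γ ∈ F, Disjoint Y (γ • Y)) :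
    ∀ γ ∈ F, Disjoint (S ∪ (Y \ ⋃ δ ∈ F, δ • S)) (γ • (S ∪ (Y \ ⋃ δ ∈ F, δ • S))) := by
  intro γ hγ
  set U := ⋃ δ ∈ F, δ • S
  have hSU : ∀ δ ∈ F, δ • S ⊆ U := fun δ hδ => subset_biUnion_of_mem (u := fun δ => δ • S) hδ
  have hnew : Disjoint (Y \ U) U := disjoint_sdiff_left
  rw [smul_set_union]
  refine (Disjoint.union_right (hS γ hγ) ?_).union_left (Disjoint.union_right ?_ ?_)
  · rw [disjoint_smul_set_right]
    exact (hnew.mono_right (hSU _ (hF γ hγ))).symm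
  · exact hnew.mono_right (hSU γ hγ)
  · exact (hY γ hγ).mono sdiff_subset (smul_set_mono sdiff_subset)

variable {A : Set X} {Xp B : ℕ → Set X} {m : ℕ}

theorem greedy_monotoneOn
    (hBsucc : ∀ j < m, B (j + 1) = B j ∪ ((A ∩ Xp (j + 1)) \ ⋃ γ ∈ F, γ • B j)) :
    MonotoneOn B (Iic m) :=
  monotoneOn_of_le_add_one ordConnected_Iic fun j _ _ hj => by
    rw [hBsucc j hj]
    exact subset_union_left

theorem greedy_subset (hB0 : B 0 = ∅)
    (hBsucc : ∀ j < m, B (j + 1) = B j ∪ ((A ∩ Xp (j + 1)) \ ⋃ γ ∈ F, γ • B j)) :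
    ∀ j ≤ m, B j ⊆ A := by
  intro j hj
  induction j with
  | zero => simp [hB0]
  | succ j ih =>
    rw [hBsucc j hj]
    exact union_subset (ih (by omega)) (sdiff_subset.trans inter_subset_left)

theorem greedy_disjoint_smul (hF : ∀ γ ∈ F, γ⁻¹ ∈ F)
    (hXp : ∀ j < m, ∀ γ ∈ F, Disjoint (Xp (j + 1)) (γ • Xp (j + 1))) (hB0 : B 0 = ∅)
    (hBsucc : ∀ j < m, B (j + 1) = B j ∪ ((A ∩ Xp (j + 1)) \ ⋃ γ ∈ F, γ • B j)) :
    ∀ j ≤ m, ∀ γ ∈ F, Disjoint (B j) (γ • B j) := by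
  intro j hj
  induction j with
  | zero => simp [hB0]
  | succ j ih =>
    rw [hBsucc j hj]
    exact disjoint_smul_union_sdiff_iUnion_smul hF (ih (by omega)) fun γ hγ =>
      (hXp j hj γ hγ).mono inter_subset_right (smul_set_mono inter_subset_right)

theorem greedy_exists_mem_smul
    (hBsucc : ∀ j < m, B (j + 1) = B j ∪ ((A ∩ Xp (j + 1)) \ ⋃ γ ∈ F, γ • B j))
    {j : ℕ} (hj : j < m) {x : X} (hxA : x ∈ A) (hxj : x ∈ Xp (j + 1)) (hx : x ∉ B m) :
    ∃ γ ∈ F, x ∈ γ • B m := by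
  have hmono := greedy_monotoneOn hBsucc
  have hx_succ : x ∉ B (j + 1) := fun h =>
    hx (hmono (mem_Iic.mpr hj) (mem_Iic.mpr le_rfl) hj h)
  have hx_rejected : x ∈ ⋃ γ ∈ F, γ • B j := by
    by_contra h
    exact hx_succ (hBsucc j hj ▸ Or.inr ⟨⟨hxA, hxj⟩, h⟩)
  obtain ⟨γ, hγ, hxγ⟩ := mem_iUnion₂.mp hx_rejected
  exact ⟨γ, hγ, smul_set_mono (hmono (mem_Iic.mpr hj.le) (mem_Iic.mpr le_rfl) hj.le) hxγ⟩

end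

theorem greedy_disjoint_maximal_general
    {Γ : Type*} [Group Γ] {X : Type*} [MulAction Γ X]
    (F : Finset Γ) (hFsymm : ∀ γ ∈ F, γ⁻¹ ∈ F)
    (m : ℕ) (Xp : ℕ → Set X)
    (hcover : (⋃ j ∈ Finset.Icc 1 m, Xp j) = Set.univ)
    (hXγ : ∀ j ∈ Finset.Icc 1 m, ∀ γ ∈ F, Xp j ∩ γ • Xp j = ∅)
    (A : Set X) (B : ℕ → Set X)
    (hB0 : B 0 = ∅)
    (hBsucc : ∀ j < m, B (j + 1) = B j ∪ ((A ∩ Xp (j + 1)) \ ⋃ γ ∈ F, γ • B j))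
    (E : Set X) (hE : E = B m) :
    E ⊆ A ∧ (∀ γ ∈ F, E ∩ γ • E = ∅) ∧
      (∀ x ∈ A \ E, ∃ γ ∈ F, x ∈ γ • E) := by
  subst hE
  have hXp : ∀ j < m, ∀ γ ∈ F, Disjoint (Xp (j + 1)) (γ • Xp (j + 1)) := fun j hj γ hγ =>
    disjoint_iff_inter_eq_empty.mpr (hXγ (j + 1) (Finset.mem_Icc.mpr ⟨j.succ_pos, hj⟩) γ hγ)
  refine ⟨greedy_subset hB0 hBsucc m le_rfl, fun γ hγ => ?_, ?_⟩
  · exact disjoint_iff_inter_eq_empty.mp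
      (greedy_disjoint_smul (F := (F : Set Γ)) hFsymm hXp hB0 hBsucc m le_rfl γ hγ)
  · rintro x ⟨hxA, hxE⟩
    obtain ⟨j, hj, hxj⟩ := mem_iUnion₂.mp (hcover.symm ▸ mem_univ x)
    obtain ⟨k, rfl⟩ : ∃ k, j = k + 1 := Nat.exists_eq_add_one.mpr (Finset.mem_Icc.mp hj).1
    exact greedy_exists_mem_smul (F := (F : Set Γ)) hBsucc (Finset.mem_Icc.mp hj).2 hxA hxj hxE

/-- Greedy construction from Section 4: given a partition `X₁, …, X_m` of `X` with
`X_j ∩ γX_j = ∅` for all `γ` in a finite symmetric set `F` of non-identity elements,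
and `A ⊆ X`, the greedily built set `E = A_m` (with `A_0 = ∅` and
`A_j = A_{j-1} ∪ ((A ∩ X_j) \ ⋃_{γ ∈ F} γA_{j-1})`) satisfies: `E ⊆ A`;
`E ∩ γE = ∅` for all `γ ∈ F`; and every `x ∈ A \ E` lies in `γE` for some `γ ∈ F`. -/
theorem greedy_disjoint_maximal
    {Γ : Type*} [Group Γ] {X : Type*} [MulAction Γ X]
    (F : Finset Γ) (h1 : (1 : Γ) ∉ F) (hFsymm : ∀ γ ∈ F, γ⁻¹ ∈ F)
    (m : ℕ) (Xp : ℕ → Set X)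
    (hcover : (⋃ j ∈ Finset.Icc 1 m, Xp j) = Set.univ)
    (hdisj : ∀ j ∈ Finset.Icc 1 m, ∀ i ∈ Finset.Icc 1 m, i ≠ j → Disjoint (Xp i) (Xp j))
    (hXγ : ∀ j ∈ Finset.Icc 1 m, ∀ γ ∈ F, Xp j ∩ γ • Xp j = ∅)
    (A : Set X) (B : ℕ → Set X)
    (hB0 : B 0 = ∅)
    (hBsucc : ∀ j < m, B (j + 1) = B j ∪ ((A ∩ Xp (j + 1)) \ ⋃ γ ∈ F, γ • B j))
    (E : Set X) (hE : E = B m) :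
    E ⊆ A ∧ (∀ γ ∈ F, E ∩ γ • E = ∅) ∧
      (∀ x ∈ A \ E, ∃ γ ∈ F, x ∈ γ • E) :=
  greedy_disjoint_maximal_general F hFsymm m Xp hcover hXγ A B hB0 hBsucc E hE
end

section
/- In the setting of the previous greedy construction, additionally assume X is a topological space carrying a finite Borel measure μ, each X_j and A are clopen, and the action of each γ ∈ F is by homeomorphisms. Then E is clopen; and if μ(A) > 0 and j is the smallest index with μ(A ∩ X_j) > 0, then μ(E) ≥ μ(A ∩ X_j) > 0. -/
open scoped Pointwise

/-! The greedy sets `B j` increase, and `B j` only ever contains points of the pieces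
`A ∩ X_k` with `k ≤ j`. Clopenness propagates along the recursion because translates by
homeomorphisms, finite unions and differences of clopen sets are clopen. If `j` is the first
index with `μ (A ∩ X_j) > 0`, then `B (j - 1)` is null, hence by invariance of `μ` so are its
finitely many translates, and the piece added at step `j` has the full measure of `A ∩ X_j`. -/

open MeasureTheory Set

section Greedy

variable {X : Type*} {m : ℕ} {P : ℕ → Set X} {N : Set X → Set X} {B : ℕ → Set X}

theorem greedy_subset_of_le (hBsucc : ∀ j < m, B (j + 1) = B j ∪ (P (j + 1) \ N (B j)))
    {i j : ℕ} (hij : i ≤ j) (hjm : j ≤ m) : B i ⊆ B j := by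
  induction j, hij using Nat.le_induction with
  | base => exact Subset.rfl
  | succ j _ ih =>
    rw [hBsucc j hjm]
    exact (ih (by omega)).trans subset_union_left

theorem greedy_subset_biUnion (hB0 : B 0 = ∅)
    (hBsucc : ∀ j < m, B (j + 1) = B j ∪ (P (j + 1) \ N (B j))) :
    ∀ i ≤ m, B i ⊆ ⋃ k ∈ Finset.Icc 1 i, P k := by
  intro i
  induction i with
  | zero => simp [hB0]
  | succ i ih =>
    intro hi
    rw [hBsucc i hi]
    refine union_subset ((ih (by omega)).trans ?_) (sdiff_subset.trans ?_)
    · exact biUnion_subset_biUnion_left fun k hk => by simp at hk ⊢; omega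
    · exact subset_biUnion_of_mem (u := P) (by simp)

theorem greedy_isClopen [TopologicalSpace X] (hB0 : B 0 = ∅)
    (hBsucc : ∀ j < m, B (j + 1) = B j ∪ (P (j + 1) \ N (B j)))
    (hN : ∀ s, IsClopen s → IsClopen (N s)) (hP : ∀ j ∈ Finset.Icc 1 m, IsClopen (P j)) :
    ∀ i ≤ m, IsClopen (B i) := by
  intro i
  induction i with
  | zero => intro _; rw [hB0]; exact isClopen_empty
  | succ i ih =>
    intro hi
    have hBi := ih (by omega)
    rw [hBsucc i hi]
    exact hBi.union ((hP (i + 1) (Finset.mem_Icc.2 ⟨by omega, hi⟩)).diff (hN _ hBi))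

variable [MeasurableSpace X] (μ : Measure X)

theorem greedy_measure_eq_zero (hB0 : B 0 = ∅)
    (hBsucc : ∀ j < m, B (j + 1) = B j ∪ (P (j + 1) \ N (B j)))
    {i : ℕ} (hi : i ≤ m) (hP : ∀ k ∈ Finset.Icc 1 i, μ (P k) = 0) : μ (B i) = 0 :=
  measure_mono_null (greedy_subset_biUnion hB0 hBsucc i hi)
    ((measure_biUnion_null_iff (Finset.countable_toSet _)).2 hP)

theorem measure_le_measure_greedy (hB0 : B 0 = ∅)
    (hBsucc : ∀ j < m, B (j + 1) = B j ∪ (P (j + 1) \ N (B j)))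
    (hN : ∀ s, μ s = 0 → μ (N s) = 0) {j : ℕ} (hj : j ∈ Finset.Icc 1 m)
    (hP : ∀ i ∈ Finset.Icc 1 m, i < j → μ (P i) = 0) : μ (P j) ≤ μ (B m) := by
  obtain ⟨hj1, hjm⟩ := Finset.mem_Icc.1 hj
  obtain ⟨i, rfl⟩ : ∃ i, j = i + 1 := ⟨j - 1, by omega⟩
  have hBi : μ (B i) = 0 := greedy_measure_eq_zero μ hB0 hBsucc (by omega) fun k hk => by
    simp only [Finset.mem_Icc] at hk
    exact hP k (Finset.mem_Icc.2 ⟨hk.1, by omega⟩) (by omega)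
  calc μ (P (i + 1)) = μ (P (i + 1) \ N (B i)) := (measure_sdiff_null (hN _ hBi)).symm
    _ ≤ μ (B (i + 1)) := measure_mono (by rw [hBsucc i (by omega)]; exact subset_union_right)
    _ ≤ μ (B m) := measure_mono (greedy_subset_of_le hBsucc (by omega) le_rfl)

end Greedy

theorem isClopen_biUnion_smul {Γ X : Type*} [Group Γ] [MulAction Γ X] [TopologicalSpace X]
    [ContinuousConstSMul Γ X] (F : Finset Γ) {s : Set X} (hs : IsClopen s) :
    IsClopen (⋃ γ ∈ F, γ • s) :=
  F.finite_toSet.isClopen_biUnion fun γ _ => ⟨hs.1.smul γ, hs.2.smul γ⟩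

theorem greedy_clopen_positive_measure_general
    {Γ : Type*} [Group Γ] {X : Type*} [MulAction Γ X] [TopologicalSpace X]
    [MeasurableSpace X]
    (μ : MeasureTheory.Measure X)
    (hcont : ∀ γ : Γ, Continuous fun x : X => γ • x)
    (hinv : ∀ (γ : Γ) (s : Set X), μ (γ • s) = μ s)
    (F : Finset Γ)
    (m : ℕ) (Xp : ℕ → Set X)
    (hXclopen : ∀ j ∈ Finset.Icc 1 m, IsClopen (Xp j))
    (A : Set X) (hA : IsClopen A) (B : ℕ → Set X)
    (hB0 : B 0 = ∅)
    (hBsucc : ∀ j < m, B (j + 1) = B j ∪ ((A ∩ Xp (j + 1)) \ ⋃ γ ∈ F, γ • B j))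
    (E : Set X) (hE : E = B m) :
    IsClopen E ∧
      (0 < μ A → ∀ j ∈ Finset.Icc 1 m, 0 < μ (A ∩ Xp j) →
        (∀ i ∈ Finset.Icc 1 m, i < j → μ (A ∩ Xp i) = 0) →
        μ (A ∩ Xp j) ≤ μ E ∧ 0 < μ E) := by
  subst hE
  have : ContinuousConstSMul Γ X := ⟨hcont⟩
  refine ⟨greedy_isClopen (P := fun k => A ∩ Xp k) (N := fun s => ⋃ γ ∈ F, γ • s) hB0 hBsucc
      (fun _ hs => isClopen_biUnion_smul F hs) (fun j hj => hA.inter (hXclopen j hj)) m le_rfl,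
    fun _ j hj hpos hmin => ?_⟩
  have hle := measure_le_measure_greedy (P := fun k => A ∩ Xp k)
    (N := fun s => ⋃ γ ∈ F, γ • s) μ hB0 hBsucc
    (fun s hs => (measure_biUnion_null_iff F.countable_toSet).2 fun γ _ => (hinv γ s).trans hs)
    hj hmin
  exact ⟨hle, hpos.trans_le hle⟩

/-- Topological/measure-theoretic continuation of the greedy construction from
Section 4: if moreover `X` is a topological space with a finite Borel measure `μ`
invariant under the (homeomorphic) action, and `A` and the pieces `X_j` are clopen,
then `E` is clopen; and if `μ(A) > 0` and `j` is the smallest index with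
`μ(A ∩ X_j) > 0`, then `μ(E) ≥ μ(A ∩ X_j) > 0`. -/
theorem greedy_clopen_positive_measure
    {Γ : Type*} [Group Γ] {X : Type*} [MulAction Γ X] [TopologicalSpace X]
    [MeasurableSpace X] [BorelSpace X]
    (μ : MeasureTheory.Measure X) [MeasureTheory.IsFiniteMeasure μ]
    (hcont : ∀ γ : Γ, Continuous fun x : X => γ • x)
    (hinv : ∀ (γ : Γ) (s : Set X), μ (γ • s) = μ s)
    (F : Finset Γ) (h1 : (1 : Γ) ∉ F) (hFsymm : ∀ γ ∈ F, γ⁻¹ ∈ F)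
    (m : ℕ) (Xp : ℕ → Set X)
    (hXclopen : ∀ j ∈ Finset.Icc 1 m, IsClopen (Xp j))
    (hcover : (⋃ j ∈ Finset.Icc 1 m, Xp j) = Set.univ)
    (hdisj : ∀ j ∈ Finset.Icc 1 m, ∀ i ∈ Finset.Icc 1 m, i ≠ j → Disjoint (Xp i) (Xp j))
    (hXγ : ∀ j ∈ Finset.Icc 1 m, ∀ γ ∈ F, Xp j ∩ γ • Xp j = ∅)
    (A : Set X) (hA : IsClopen A) (B : ℕ → Set X)
    (hB0 : B 0 = ∅)
    (hBsucc : ∀ j < m, B (j + 1) = B j ∪ ((A ∩ Xp (j + 1)) \ ⋃ γ ∈ F, γ • B j))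
    (E : Set X) (hE : E = B m) :
    IsClopen E ∧
      (0 < μ A → ∀ j ∈ Finset.Icc 1 m, 0 < μ (A ∩ Xp j) →
        (∀ i ∈ Finset.Icc 1 m, i < j → μ (A ∩ Xp i) = 0) →
        μ (A ∩ Xp j) ≤ μ E ∧ 0 < μ E) :=
  greedy_clopen_positive_measure_general μ hcont hinv F m Xp hXclopen A hA B hB0 hBsucc E hE
end

section
/- Let σ be a simplex in the barycentric subdivision of a simplicial complex K, and suppose the vertices of K are colored such that the color of a barycenter depends only on the simplex of K it is the barycenter of. If two vertices of the subdivision lying in a common subdivision simplex correspond to simplices τ ⊆ τ' of K, and any such pair either has the same color or the colors come from 'different levels' of a fixed filtration of K by subcomplexes K_0 ⊆ K_1 ⊆ ⋯ ⊆ K_n = K (where the level of τ is the least i with τ ∈ K_i, and same-level distinct components get distinct colors), then every rainbow n-simplex of the subdivision (all n+1 vertex colors distinct) has exactly one vertex at each level 0, 1, …, n. -/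
open Function

theorem Monotone.injective_comp_of_eq_or_ne {ι S C L : Type*} [LinearOrder ι] [Preorder S]
    {col : S → C} {lvl : S → L}
    (hcolor : ∀ τ τ' : S, τ ≤ τ' → col τ = col τ' ∨ lvl τ ≠ lvl τ')
    {v : ι → S} (hv : Monotone v) (hcol : Injective (col ∘ v)) :
    Injective (lvl ∘ v) :=
  .of_lt_imp_ne fun _ _ hij =>
    (hcolor _ _ (hv hij.le)).resolve_left (hcol.ne hij.ne)

/-- Combinatorial heart of Lemma 2.3.  A simplex of the barycentric subdivision of `K`
corresponds to a strictly increasing chain `v 0 ⊂ v 1 ⊂ ⋯ ⊂ v n` of simplices of `K`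
(its vertices are their barycenters).  Vertices are colored by `col` (the color of a
barycenter depends only on the underlying simplex), and `lvl τ` is the filtration level
of `τ` (least `i` with `τ ∈ K_i`).  If any two simplices `τ ⊆ τ'` of `K` either have the
same color or lie at different levels, then every rainbow `n`-simplex of the subdivision
(all `n+1` vertex colors distinct) has exactly one vertex at each level `0, 1, …, n`. -/
theorem rainbow_simplex_levels
    {S : Type*} [PartialOrder S] {C : Type*} (n : ℕ)
    (col : S → C) (lvl : S → Fin (n + 1))
    (hcolor : ∀ τ τ' : S, τ ≤ τ' → col τ = col τ' ∨ lvl τ ≠ lvl τ')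
    (v : Fin (n + 1) → S) (hchain : StrictMono v)
    (hrainbow : Function.Injective (col ∘ v)) :
    Function.Bijective (lvl ∘ v) :=
  Finite.injective_iff_bijective.mp (hchain.monotone.injective_comp_of_eq_or_ne hcolor hrainbow)
end
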